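/- Let w₁,…,w_n ≥ 0 with W = ∑ w_i > 0 and vectors x₁,…,x_n ∈ ℝ^p. Define the weighted mean μ_w = (∑ w_i x_i)/W and weighted scatter V_w = ∑ w_i (x_i − μ_w)(x_i − μ_w)ᵀ. If w'_i = c_i w_i with c_i ∈ [e^{−η}, e^{η}] for all i, then e^{−2η} V_w ⪯ V_{w'} ⪯ e^{2η} V_w in the Loewner order. -/

import Mathlib

/-!
In a direction `u`, the quadratic form `uᵀ V_w u` is the weighted scatter of the scalars
`u ⬝ᵥ xᵢ` about their weighted mean. The weighted mean minimises `∑ wᵢ (sᵢ - m)²` over `m`, so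
`uᵀ V_{w'} u ≤ ∑ w'ᵢ (sᵢ - μ_w)² ≤ e^η uᵀ V_w u`, and symmetrically with the roles of `w` and
`w'` exchanged since `wᵢ ≤ e^η w'ᵢ`. The hypotheses on `c` force `η ≥ 0`, so `e^η ≤ e^{2η}`.
-/

open Matrix

noncomputable section

variable {ι : Type*} [Fintype ι]

def weightedMean {E : Type*} [AddCommGroup E] [Module ℝ E] (a : ι → ℝ) (x : ι → E) : E :=
  (∑ i, a i)⁻¹ • ∑ i, a i • x i

def scatter (a s : ι → ℝ) : ℝ :=
  ∑ i, a i * (s i - weightedMean a s) ^ 2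

def scatterMatrix {κ : Type*} (a : ι → ℝ) (x : ι → κ → ℝ) : Matrix κ κ ℝ :=
  of fun j k => ∑ i, a i * (x i j - weightedMean a x j) * (x i k - weightedMean a x k)

lemma weightedMean_apply {κ : Type*} (a : ι → ℝ) (x : ι → κ → ℝ) (j : κ) :
    weightedMean a x j = (∑ i, a i * x i j) / ∑ i, a i := by
  simp [weightedMean, Finset.sum_apply, div_eq_inv_mul]

lemma scatter_le_sum_mul_sq_sub {a : ι → ℝ} (hA : 0 < ∑ i, a i) (s : ι → ℝ) (m : ℝ) :
    scatter a s ≤ ∑ i, a i * (s i - m) ^ 2 := by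
  set μ := weightedMean a s
  have hμ : (∑ i, a i) * μ = ∑ i, a i * s i := by
    simp only [μ, weightedMean, smul_eq_mul]
    field_simp
  have hcentered : ∑ i, a i * (s i - μ) = 0 := by
    simp only [mul_sub, Finset.sum_sub_distrib, ← Finset.sum_mul, hμ, sub_self]
  have hsplit : ∑ i, a i * (s i - m) ^ 2
      = scatter a s + (∑ i, a i) * (μ - m) ^ 2 + 2 * (μ - m) * ∑ i, a i * (s i - μ) := by
    simp only [scatter, Finset.sum_mul, Finset.mul_sum, ← Finset.sum_add_distrib]
    exact Finset.sum_congr rfl fun i _ => by ring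
  rw [hsplit, hcentered]
  nlinarith [sq_nonneg (μ - m)]

/-- One-sided comparison of weights transfers to the scatters: recentre the `a'`-scatter at the
`a`-mean, which can only increase it, then compare termwise. -/
lemma scatter_le_mul_scatter {a a' : ι → ℝ} {r : ℝ} (hA' : 0 < ∑ i, a' i)
    (h : ∀ i, a' i ≤ r * a i) (s : ι → ℝ) :
    scatter a' s ≤ r * scatter a s := by
  calc scatter a' s ≤ ∑ i, a' i * (s i - weightedMean a s) ^ 2 :=
        scatter_le_sum_mul_sq_sub hA' s _
    _ ≤ ∑ i, r * (a i * (s i - weightedMean a s) ^ 2) :=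
        Finset.sum_le_sum fun i _ => by
          rw [← mul_assoc]; exact mul_le_mul_of_nonneg_right (h i) (sq_nonneg _)
    _ = r * scatter a s := by rw [scatter, Finset.mul_sum]

lemma dotProduct_weightedMean {κ : Type*} [Fintype κ] (a : ι → ℝ) (x : ι → κ → ℝ)
    (u : κ → ℝ) : u ⬝ᵥ weightedMean a x = weightedMean a fun i => u ⬝ᵥ x i := by
  simp [weightedMean, dotProduct_sum, dotProduct_smul]

lemma dotProduct_scatterMatrix_mulVec {κ : Type*} [Fintype κ] (a : ι → ℝ) (x : ι → κ → ℝ)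
    (u : κ → ℝ) : u ⬝ᵥ scatterMatrix a x *ᵥ u = scatter a fun i => u ⬝ᵥ x i := by
  have hdev : ∀ i, u ⬝ᵥ x i - weightedMean a (fun i => u ⬝ᵥ x i)
      = ∑ j, u j * (x i j - weightedMean a x j) := by
    intro i
    rw [← dotProduct_weightedMean, ← dotProduct_sub]
    rfl
  rw [scatter]
  simp only [hdev]
  simp only [sq, Finset.mul_sum, Finset.sum_mul, dotProduct, mulVec,
    scatterMatrix, of_apply]
  refine ((Finset.sum_congr rfl fun _ _ => Finset.sum_comm).trans Finset.sum_comm).trans ?_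
  exact Finset.sum_congr rfl fun i _ => Finset.sum_congr rfl fun j _ =>
    Finset.sum_congr rfl fun k _ => by ring

lemma scatterMatrix_isHermitian {κ : Type*} (a : ι → ℝ) (x : ι → κ → ℝ) :
    (scatterMatrix a x).IsHermitian := by
  ext j k
  simp only [conjTranspose_apply, star_trivial, scatterMatrix, of_apply]
  exact Finset.sum_congr rfl fun i _ => by ring

lemma posSemidef_sub_of_forall_dotProduct_mulVec_le {κ : Type*} [Fintype κ]
    {A B : Matrix κ κ ℝ} (hA : A.IsHermitian) (hB : B.IsHermitian)
    (h : ∀ u, u ⬝ᵥ A *ᵥ u ≤ u ⬝ᵥ B *ᵥ u) : (B - A).PosSemidef := by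
  refine posSemidef_iff_dotProduct_mulVec.mpr ⟨hB.sub hA, fun u => ?_⟩
  rw [star_trivial, sub_mulVec, dotProduct_sub, sub_nonneg]
  exact h u

lemma posSemidef_smul_scatterMatrix_sub {κ : Type*} [Fintype κ] {a a' : ι → ℝ} {r : ℝ}
    (hA' : 0 < ∑ i, a' i) (h : ∀ i, a' i ≤ r * a i) (x : ι → κ → ℝ) :
    (r • scatterMatrix a x - scatterMatrix a' x).PosSemidef := by
  refine posSemidef_sub_of_forall_dotProduct_mulVec_le (scatterMatrix_isHermitian a' x)
    ((scatterMatrix_isHermitian a x).smul (IsSelfAdjoint.all r)) fun u => ?_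
  rw [smul_mulVec, dotProduct_smul, smul_eq_mul, dotProduct_scatterMatrix_mulVec,
    dotProduct_scatterMatrix_mulVec]
  exact scatter_le_mul_scatter hA' h _

end

/-- Multiplicative perturbation of weights by factors in `[e^{−η}, e^{η}]` changes the
weighted scatter matrix by at most `e^{±2η}` in the Loewner order. -/
theorem stmt13 {n p : ℕ} (w c : Fin n → ℝ) (x : Fin n → (Fin p → ℝ)) (η : ℝ)
    (hw : ∀ i, 0 ≤ w i) (hW : 0 < ∑ i, w i)
    (hc : ∀ i, Real.exp (-η) ≤ c i ∧ c i ≤ Real.exp η)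
    (μw μw' : Fin p → ℝ)
    (hμw : ∀ j, μw j = (∑ i, w i * x i j) / (∑ i, w i))
    (hμw' : ∀ j, μw' j = (∑ i, c i * w i * x i j) / (∑ i, c i * w i))
    (Vw Vw' : Matrix (Fin p) (Fin p) ℝ)
    (hVw : ∀ j k, Vw j k = ∑ i, w i * (x i j - μw j) * (x i k - μw k))
    (hVw' : ∀ j k, Vw' j k = ∑ i, c i * w i * (x i j - μw' j) * (x i k - μw' k)) :
    (Vw' - Real.exp (-(2 * η)) • Vw).PosSemidef ∧
      (Real.exp (2 * η) • Vw - Vw').PosSemidef := by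
  obtain rfl : μw = weightedMean w x := funext fun j => by rw [hμw, weightedMean_apply]
  obtain rfl : μw' = weightedMean (fun i => c i * w i) x :=
    funext fun j => by rw [hμw', weightedMean_apply]
  obtain rfl : Vw = scatterMatrix w x := ext hVw
  obtain rfl : Vw' = scatterMatrix (fun i => c i * w i) x := ext hVw'
  obtain ⟨i₀⟩ : Nonempty (Fin n) := by
    by_contra h
    simp_all
  have hη : 0 ≤ η := by
    have := Real.exp_le_exp.mp ((hc i₀).1.trans (hc i₀).2)
    linarith
  have hexp : Real.exp η ≤ Real.exp (2 * η) := Real.exp_le_exp.mpr (by linarith)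
  have hcw_le : ∀ i, c i * w i ≤ Real.exp (2 * η) * w i := fun i =>
    mul_le_mul_of_nonneg_right ((hc i).2.trans hexp) (hw i)
  have hw_le : ∀ i, w i ≤ Real.exp (2 * η) * (c i * w i) := fun i => by
    have : 1 ≤ Real.exp (2 * η) * c i := by
      calc (1 : ℝ) = Real.exp η * Real.exp (-η) := by rw [← Real.exp_add, add_neg_cancel,
            Real.exp_zero]
        _ ≤ Real.exp (2 * η) * c i := mul_le_mul hexp (hc i).1 (Real.exp_pos _).le
            (Real.exp_pos _).le
    nlinarith [hw i]
  have hcW : 0 < ∑ i, c i * w i := by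
    have := hW.trans_le (Finset.sum_le_sum fun i _ => hw_le i)
    rw [← Finset.mul_sum] at this
    exact pos_of_mul_pos_right this (Real.exp_pos _).le
  refine ⟨?_, posSemidef_smul_scatterMatrix_sub hcW hcw_le x⟩
  convert (posSemidef_smul_scatterMatrix_sub hW hw_le x).smul (Real.exp_pos (-(2 * η))).le
    using 1
  rw [smul_sub, smul_smul, ← Real.exp_add, neg_add_cancel, Real.exp_zero, one_smul]
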